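/- Assume the coverage constraint (E2) and the flow-conservation constraint (E3) hold, the precedence-time constraint holds, and s(i) > 0 for every call i. If z(i,k) = 1 for some call i and ambulance k (i.e., i is the last call served by ambulance k), then (a) w(i,j,k) = 0 for every call j ≠ i (no call is served by k after i), and (b) there exist n ≥ 0 and pairwise distinct calls j₀, j₁, …, jₙ = i such that x(j₀,k) = 1 and w(j_l, j_{l+1}, k) = 1 for every l < n; that is, ambulance k also has a first served call, reached from which call i is the end of a finite chain of precedences. -/

import Mathlib

/-!
Flow conservation (E3) at `i`, together with the bound `x i k + inflow ≤ 1` given by (E2), turns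
`z i k = 1` into zero outflow, which is (a); it also shows that `k` serves `i`. A call served by `k`
that is not its first call has, by (E2) and (E3), a predecessor that `k` also serves, and by the
precedence-time constraint with `s > 0` that predecessor starts strictly earlier. Hence walking back
along predecessors terminates on the finite set of calls, at a first call, and the times along the
resulting chain strictly increase, so its calls are pairwise distinct.
-/

open Finset

section Chain

variable {α : Type*} {r : α → α → Prop}

theorem exists_chain_of_wellFounded {start reached : α → Prop} (hwf : WellFounded r)
    (hstep : ∀ c, reached c → start c ∨ ∃ b, reached b ∧ r b c) {c : α} (hc : reached c) :
    ∃ (n : ℕ) (j : ℕ → α), j n = c ∧ start (j 0) ∧ ∀ l < n, r (j l) (j (l + 1)) := by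
  induction c using hwf.induction with
  | _ c ih =>
  rcases hstep c hc with hstart | ⟨b, hb, hbc⟩
  · exact ⟨0, fun _ => c, rfl, hstart, fun l hl => absurd hl (Nat.not_lt_zero l)⟩
  obtain ⟨n, j, hjn, hj0, hchain⟩ := ih b hbc hb
  refine ⟨n + 1, fun l => if l ≤ n then j l else c, by simp, by simpa using hj0, fun l hl => ?_⟩
  rcases Nat.lt_succ_iff_lt_or_eq.mp hl with hl | rfl
  · simpa [hl.le, Nat.succ_le_of_lt hl] using hchain l hl
  · simpa [hjn] using hbc

variable {β : Type*} [Preorder β] {t : α → β}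

theorem wellFounded_of_lt_comp [Finite α] (ht : ∀ a b, r a b → t a < t b) : WellFounded r :=
  Subrelation.wf (ht _ _) (Finite.wellFounded_of_trans_of_irrefl (InvImage (· < ·) t))

theorem injOn_Iic_of_chain (ht : ∀ a b, r a b → t a < t b) {n : ℕ} {j : ℕ → α}
    (hj : ∀ l < n, r (j l) (j (l + 1))) : Set.InjOn j (Set.Iic n) :=
  (strictMonoOn_Iic_of_lt_succ (ψ := t ∘ j) fun l hl => ht _ _ (hj l hl)).injOn.of_comp

end Chain

section Dispatch

variable {C A : Type*} [Fintype C] [DecidableEq C]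

def inflow (w : C → C → A → ℕ) (i : C) (k : A) : ℕ :=
  ∑ j ∈ univ.filter (fun j => j ≠ i), w j i k

def outflow (w : C → C → A → ℕ) (i : C) (k : A) : ℕ :=
  ∑ j ∈ univ.filter (fun j => j ≠ i), w i j k

def Serves (x : C → A → ℕ) (w : C → C → A → ℕ) (k : A) (c : C) : Prop :=
  0 < x c k + inflow w c k

variable {x z : C → A → ℕ} {w : C → C → A → ℕ}

theorem le_inflow {i j : C} (hji : j ≠ i) (k : A) : w j i k ≤ inflow w i k :=
  single_le_sum (f := fun j => w j i k) (fun _ _ => Nat.zero_le _) (by simpa using hji)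

theorem le_outflow {i j : C} (hji : j ≠ i) (k : A) : w i j k ≤ outflow w i k :=
  single_le_sum (f := fun j => w i j k) (fun _ _ => Nat.zero_le _) (by simpa using hji)

theorem serves_of_last (hE3 : ∀ i k, x i k + inflow w i k = z i k + outflow w i k) {i : C}
    {k : A} (hz : z i k = 1) : Serves x w k i := by
  have := hE3 i k
  unfold Serves
  omega

variable [Fintype A]

theorem add_inflow_le_one (hE2 : ∀ i, ∑ k, x i k + ∑ k, inflow w i k = 1) (i : C) (k : A) :
    x i k + inflow w i k ≤ 1 := by
  have hx := single_le_sum (f := fun k => x i k) (fun _ _ => Nat.zero_le _) (mem_univ k)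
  have hin := single_le_sum (f := fun k => inflow w i k) (fun _ _ => Nat.zero_le _) (mem_univ k)
  have := hE2 i
  omega

theorem outflow_eq_zero_of_last (hE2 : ∀ i, ∑ k, x i k + ∑ k, inflow w i k = 1)
    (hE3 : ∀ i k, x i k + inflow w i k = z i k + outflow w i k) {i : C} {k : A}
    (hz : z i k = 1) : outflow w i k = 0 := by
  have := add_inflow_le_one hE2 i k
  have := hE3 i k
  omega

theorem Serves.first_or_exists_pred (hE2 : ∀ i, ∑ k, x i k + ∑ k, inflow w i k = 1)
    (hE3 : ∀ i k, x i k + inflow w i k = z i k + outflow w i k) {k : A} {c : C}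
    (hc : Serves x w k c) : x c k = 1 ∨ ∃ b, Serves x w k b ∧ w b c k = 1 := by
  have hle := add_inflow_le_one hE2 c k
  unfold Serves at hc
  by_cases hx : x c k = 0
  · obtain ⟨b, hb, hbc⟩ := exists_ne_zero_of_sum_ne_zero (s := univ.filter (fun j => j ≠ c))
      (f := fun j => w j c k) (by unfold inflow at hc; omega)
    have hbc_ne : b ≠ c := by simpa using hb
    have hw : w b c k = 1 := by have := le_inflow (w := w) hbc_ne k; omega
    have hout := le_outflow (w := w) hbc_ne.symm k
    have := hE3 b k
    exact Or.inr ⟨b, by unfold Serves; omega, hw⟩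
  · exact Or.inl (by omega)

end Dispatch

theorem last_call_chain_from_first_general
    {C A : Type*} [Fintype C] [Fintype A] [DecidableEq C]
    (t s : C → ℝ) (x z : C → A → ℕ) (w : C → C → A → ℕ)
    (hE2 : ∀ i, (∑ k, x i k) +
        ∑ k, ∑ j ∈ univ.filter (fun j => j ≠ i), w j i k = 1)
    (hE3 : ∀ i k, x i k + ∑ j ∈ univ.filter (fun j => j ≠ i), w j i k
        = z i k + ∑ j ∈ univ.filter (fun j => j ≠ i), w i j k)
    (hprec : ∀ i j k, w i j k = 1 → t i + s i ≤ t j)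
    (hs : ∀ i, 0 < s i)
    (i : C) (k : A) (hzi : z i k = 1) :
    (∀ j, j ≠ i → w i j k = 0) ∧
    (∃ (n : ℕ) (j : ℕ → C), j n = i ∧ x (j 0) k = 1 ∧
      (∀ l₁ l₂, l₁ ≤ n → l₂ ≤ n → l₁ ≠ l₂ → j l₁ ≠ j l₂) ∧
      (∀ l < n, w (j l) (j (l + 1)) k = 1)) := by
  have hout : outflow w i k = 0 := outflow_eq_zero_of_last hE2 hE3 hzi
  have hearlier : ∀ a b, w a b k = 1 → t a < t b := fun a b hab =>
    (lt_add_of_pos_right _ (hs a)).trans_le (hprec a b k hab)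
  obtain ⟨n, j, hjn, hj0, hchain⟩ := exists_chain_of_wellFounded (r := fun a b => w a b k = 1)
    (wellFounded_of_lt_comp hearlier) (fun _ hc => hc.first_or_exists_pred hE2 hE3)
    (serves_of_last hE3 hzi)
  refine ⟨fun c hc => sum_eq_zero_iff.mp hout c (by simpa using hc), n, j, hjn, hj0, ?_, hchain⟩
  exact fun l₁ l₂ h₁ h₂ hne heq => hne (injOn_Iic_of_chain hearlier hchain h₁ h₂ heq)

/-- Under (E2), (E3), the precedence-time constraint and positive
service times, if z(i,k) = 1 then (a) w(i,j,k) = 0 for every call j ≠ i (no call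
is served by k after i), and (b) there exist n ≥ 0 and pairwise distinct calls
j₀,…,jₙ = i with x(j₀,k) = 1 and w(j_l, j_{l+1}, k) = 1 for every l < n. -/
theorem last_call_chain_from_first
    {C A : Type*} [Fintype C] [Fintype A] [DecidableEq C]
    (t s : C → ℝ) (x z : C → A → ℕ) (w : C → C → A → ℕ)
    (hx : ∀ i k, x i k = 0 ∨ x i k = 1)
    (hz : ∀ i k, z i k = 0 ∨ z i k = 1)
    (hw : ∀ i j k, w i j k = 0 ∨ w i j k = 1)
    (hE2 : ∀ i, (∑ k, x i k) +
        ∑ k, ∑ j ∈ univ.filter (fun j => j ≠ i), w j i k = 1)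
    (hE3 : ∀ i k, x i k + ∑ j ∈ univ.filter (fun j => j ≠ i), w j i k
        = z i k + ∑ j ∈ univ.filter (fun j => j ≠ i), w i j k)
    (hprec : ∀ i j k, w i j k = 1 → t i + s i ≤ t j)
    (hs : ∀ i, 0 < s i)
    (i : C) (k : A) (hzi : z i k = 1) :
    (∀ j, j ≠ i → w i j k = 0) ∧
    (∃ (n : ℕ) (j : ℕ → C), j n = i ∧ x (j 0) k = 1 ∧
      (∀ l₁ l₂, l₁ ≤ n → l₂ ≤ n → l₁ ≠ l₂ → j l₁ ≠ j l₂) ∧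
      (∀ l < n, w (j l) (j (l + 1)) k = 1)) :=
  last_call_chain_from_first_general t s x z w hE2 hE3 hprec hs i k hzi
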